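/- arXiv:1001.2408 — 2 statements merged into one kernel-verified Lean document; each statement's English description precedes it below -/
import Mathlib

section
/- Consider the set C = {(A,B) ∈ SU(2)² : AB = BA} of pairs of commuting elements of SU(2), with the equivalence relation of simultaneous conjugation, and consider (ℝ/2πℤ)² with the equivalence relation identifying (φ,ψ) with (−φ,−ψ). The map sending (φ,ψ) to the commuting pair (diag(e^{iφ}, e^{−iφ}), diag(e^{iψ}, e^{−iψ})) descends to a homeomorphism from the quotient of (ℝ/2πℤ)² by the involution (φ,ψ) ↦ (−φ,−ψ) onto the quotient of C by simultaneous conjugation (both quotients carrying the quotient topology). -/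
open Matrix

noncomputable section

/-- SU(2) as the special unitary group of 2×2 complex matrices. -/
abbrev SU2 : Submonoid (Matrix (Fin 2) (Fin 2) ℂ) := Matrix.specialUnitaryGroup (Fin 2) ℂ

instance : Group SU2 :=
  { (inferInstance : Monoid SU2) with
    inv := fun A => ⟨star A.val, Matrix.mem_specialUnitaryGroup_iff.mpr
      ⟨Unitary.star_mem (Matrix.mem_specialUnitaryGroup_iff.mp A.2).1, by
        have h2 : A.val.det = 1 := (Matrix.mem_specialUnitaryGroup_iff.mp A.2).2
        simp [Matrix.star_eq_conjTranspose, Matrix.det_conjTranspose, h2]⟩⟩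
    inv_mul_cancel := fun A => Subtype.ext (Matrix.mem_specialUnitaryGroup_iff.mp A.2).1.1 }

/-- The angle of an element of SU(2): `arccos(Re(Tr M)/2) ∈ [0, π]`. -/
def ang (A : SU2) : ℝ := Real.arccos ((A.val.trace).re / 2)
theorem diag_mem (φ : ℝ) :
    !![Complex.exp (φ * Complex.I), 0; 0, Complex.exp (-(φ * Complex.I))] ∈ SU2 := by
  rw [Matrix.mem_specialUnitaryGroup_iff]
  constructor
  · rw [Matrix.mem_unitaryGroup_iff]
    have hstar : star !![Complex.exp (φ * Complex.I), 0; 0, Complex.exp (-(φ * Complex.I))] =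
        !![Complex.exp (-(φ * Complex.I)), 0; 0, Complex.exp (φ * Complex.I)] := by
      rw [Matrix.star_eq_conjTranspose]
      ext i j
      fin_cases i <;> fin_cases j <;>
        simp [Matrix.conjTranspose_apply, ← Complex.exp_conj, _root_.map_mul, Complex.conj_I,
          Complex.conj_ofReal]
    rw [hstar, Matrix.mul_fin_two]
    simp [← Complex.exp_add]
    exact Matrix.one_fin_two.symm
  · rw [Matrix.det_fin_two_of]
    simp [← Complex.exp_add]

/-- The diagonal element `diag(e^{iφ}, e^{−iφ})` of SU(2). -/
def diagSU (φ : ℝ) : SU2 := ⟨_, diag_mem φ⟩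

theorem diagSU_comm (φ ψ : ℝ) : diagSU φ * diagSU ψ = diagSU ψ * diagSU φ := by
  apply Subtype.ext
  show (diagSU φ).val * (diagSU ψ).val = (diagSU ψ).val * (diagSU φ).val
  simp only [diagSU, Matrix.mul_fin_two]
  ext i j
  fin_cases i <;> fin_cases j <;> simp <;> ring

/-- Pairs of commuting elements of SU(2). -/
def CommPairs : Type := {p : SU2 × SU2 // p.1 * p.2 = p.2 * p.1}

instance : TopologicalSpace CommPairs :=
  inferInstanceAs (TopologicalSpace {p : SU2 × SU2 // p.1 * p.2 = p.2 * p.1})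

/-- Simultaneous conjugation on commuting pairs. -/
def commSetoid : Setoid CommPairs where
  r p q := ∃ g : SU2, q.val.1 = g * p.val.1 * g⁻¹ ∧ q.val.2 = g * p.val.2 * g⁻¹
  iseqv := by
    constructor
    · intro p; exact ⟨1, by simp, by simp⟩
    · rintro p q ⟨g, h1, h2⟩
      refine ⟨g⁻¹, ?_, ?_⟩ <;> simp [h1, h2, mul_assoc]
    · rintro p q r ⟨g, h1, h2⟩ ⟨g', h1', h2'⟩
      refine ⟨g' * g, ?_, ?_⟩ <;> simp [h1, h2, h1', h2', mul_assoc]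

/-- The relation identifying `(φ, ψ)` with `(−φ, −ψ)` on the torus `(ℝ/2πℤ)²`. -/
def negSetoid : Setoid (AddCircle (2 * Real.pi) × AddCircle (2 * Real.pi)) where
  r x y := y = x ∨ y = -x
  iseqv := by
    constructor
    · intro x; exact Or.inl rfl
    · rintro x y (rfl | rfl)
      · exact Or.inl rfl
      · exact Or.inr (neg_neg x).symm
    · rintro x y z (rfl | rfl) (rfl | rfl) <;> simp

/-! Commuting A, B ∈ SU(2) have a common unit eigenvector; an element of SU(2) whose first
column is that vector conjugates both to upper triangular, hence diagonal, elements of SU(2).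
So every class of commuting pairs contains a diagonal pair (diag(z, z⁻¹), diag(w, w⁻¹)), and the
Weyl element swaps the diagonal entries, so (z, w) and (z⁻¹, w⁻¹) give the same class.
The traces of A, B and AB are conjugation invariants, equal to z + z⁻¹, w + w⁻¹ and zw + (zw)⁻¹
on a diagonal pair, and these determine (z, w) up to simultaneous inversion. Hence the map is a
bijection and the trace map to ℂ³ is a continuous injection, so the target is Hausdorff; a
continuous bijection from a compact space onto a Hausdorff space is a homeomorphism. -/

open Complex ComplexConjugate

theorem Module.End.exists_common_eigenvector {K V : Type*} [Field K] [IsAlgClosed K]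
    [AddCommGroup V] [Module K V] [FiniteDimensional K V] [Nontrivial V]
    {f g : Module.End K V} (h : Commute f g) :
    ∃ v ≠ 0, ∃ a b : K, f v = a • v ∧ g v = b • v := by
  obtain ⟨a, ha⟩ := exists_eigenvalue f
  have hmaps := mapsTo_genEigenspace_of_comm h a 1
  have : Nontrivial (f.eigenspace a) := Submodule.nontrivial_iff_ne_bot.mpr ha
  obtain ⟨b, hb⟩ := exists_eigenvalue (g.restrict hmaps)
  obtain ⟨⟨v, hv⟩, hvb⟩ := hb.exists_hasEigenvector
  refine ⟨v, fun h0 => hvb.2 (Subtype.ext h0), a, b, mem_eigenspace_iff.mp hv, ?_⟩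
  exact congrArg Subtype.val (mem_eigenspace_iff.mp hvb.1)

theorem Matrix.mul_mul_apply_eq_zero_of_mulVec_eq_smul {n R : Type*} [Fintype n]
    [DecidableEq n] [CommSemiring R] {V M U : Matrix n n R} (hVU : V * U = 1) {j : n} {a : R}
    (hM : M *ᵥ U.col j = a • U.col j) {i : n} (hij : i ≠ j) : (V * M * U) i j = 0 := by
  have hcol : (V * M * U).col j = a • Pi.single j 1 := by
    rw [← mulVec_single_one, ← mulVec_mulVec, ← mulVec_mulVec, mulVec_single_one, hM,
      mulVec_smul, ← mulVec_single_one U, mulVec_mulVec, hVU, one_mulVec]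
  simpa [hij] using congrFun hcol i

theorem add_inv_eq_add_inv_iff {K : Type*} [Field K] {a b : K} (ha : a ≠ 0) (hb : b ≠ 0) :
    a + a⁻¹ = b + b⁻¹ ↔ b = a ∨ b = a⁻¹ := by
  have key : a + a⁻¹ - (b + b⁻¹) = (a - b) * (a * b - 1) / (a * b) := by
    field_simp; ring
  rw [← sub_eq_zero, key, div_eq_zero_iff, or_iff_left (mul_ne_zero ha hb), mul_eq_zero,
    sub_eq_zero, sub_eq_zero, mul_eq_one_iff_inv_eq₀ ha, eq_comm, eq_comm (a := a⁻¹)]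

theorem pair_eq_or_eq_inv_of_add_inv_eq {K : Type*} [Field K] {a b a' b' : K}
    (ha : a ≠ 0) (hb : b ≠ 0) (ha' : a' ≠ 0) (hb' : b' ≠ 0)
    (h₁ : a + a⁻¹ = a' + a'⁻¹) (h₂ : b + b⁻¹ = b' + b'⁻¹)
    (h₃ : a * b + (a * b)⁻¹ = a' * b' + (a' * b')⁻¹) :
    (a', b') = (a, b) ∨ (a', b') = (a⁻¹, b⁻¹) := by
  have mixed : ∀ {c d : K}, c ≠ 0 → d ≠ 0 →
      c * d + (c * d)⁻¹ = c * d⁻¹ + (c * d⁻¹)⁻¹ → c = c⁻¹ ∨ d = d⁻¹ := by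
    intro c d hc hd h
    have : (c - c⁻¹) * (d - d⁻¹) = 0 := by
      field_simp at h ⊢
      linear_combination h
    simpa [sub_eq_zero] using this
  rcases (add_inv_eq_add_inv_iff ha ha').mp h₁ with rfl | rfl <;>
    rcases (add_inv_eq_add_inv_iff hb hb').mp h₂ with rfl | rfl
  · exact .inl rfl
  · rcases mixed ha hb h₃ with h | h
    · exact .inr (by rw [← h])
    · exact .inl (by rw [← h])
  · rw [mul_comm a, mul_comm a⁻¹] at h₃
    rcases mixed hb ha h₃ with h | h
    · exact .inr (by rw [← h])
    · exact .inl (by rw [← h])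
  · exact .inr rfl

theorem Matrix.star_eq_adjugate_of_mem_specialUnitaryGroup {n α : Type*} [Fintype n]
    [DecidableEq n] [CommRing α] [StarRing α] {M : Matrix n n α}
    (hM : M ∈ specialUnitaryGroup n α) : star M = adjugate M := by
  obtain ⟨hU, hdet⟩ := mem_specialUnitaryGroup_iff.mp hM
  rw [← inv_eq_left_inv (mem_unitaryGroup_iff'.mp hU),
    inv_eq_left_inv (by rw [adjugate_mul, hdet, one_smul])]

theorem mem_SU2_of_normSq_add_normSq {a b : ℂ} (h : normSq a + normSq b = 1) :
    !![a, -conj b; b, conj a] ∈ SU2 := by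
  have hc : a * conj a + b * conj b = 1 := by
    simp only [mul_conj]; exact_mod_cast h
  refine mem_specialUnitaryGroup_iff.mpr ⟨mem_unitaryGroup_iff'.mpr ?_, ?_⟩
  · ext i j
    simp only [star_eq_conjTranspose, mul_apply, Fin.sum_univ_two, conjTranspose_apply]
    fin_cases i <;> fin_cases j <;> simp
    all_goals first | linear_combination hc | ring
  · rw [det_fin_two_of]; linear_combination hc

theorem eq_of_mem_SU2 {M : Matrix (Fin 2) (Fin 2) ℂ} (hM : M ∈ SU2) :
    M = !![M 0 0, -conj (M 1 0); M 1 0, conj (M 0 0)] := by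
  have h := star_eq_adjugate_of_mem_specialUnitaryGroup hM
  rw [star_eq_conjTranspose, adjugate_fin_two] at h
  have h00 := congrFun₂ h 0 0
  have h01 := congrFun₂ h 0 1
  simp at h00 h01
  ext i j; fin_cases i <;> fin_cases j <;> simp [← h00, h01]

def diagCircle : Circle →* SU2 where
  toFun z := ⟨!![(z : ℂ), 0; 0, (z : ℂ)⁻¹], by
    simpa [← Circle.coe_inv, Circle.coe_inv_eq_conj] using
      mem_SU2_of_normSq_add_normSq (a := z) (b := 0) (by simp)⟩
  map_one' := Subtype.ext (by simp [one_fin_two])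
  map_mul' z w := Subtype.ext (by simp [mul_comm])

theorem diagCircle_val (z : Circle) :
    (diagCircle z).val = !![(z : ℂ), 0; 0, (z : ℂ)⁻¹] := rfl

theorem diagCircle_exp (φ : ℝ) : diagCircle (Circle.exp φ) = diagSU φ := by
  refine Subtype.ext ?_
  rw [diagCircle_val, Circle.coe_exp, ← Complex.exp_neg]
  rfl

theorem continuous_diagCircle : Continuous diagCircle := by
  refine Continuous.subtype_mk (continuous_matrix fun i j => ?_) _
  fin_cases i <;> fin_cases j <;> simp
  all_goals first | fun_prop | exact continuous_subtype_val.inv₀ Circle.coe_ne_zero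

theorem exists_eq_diagCircle_of_val_one_zero {A : SU2} (h : A.val 1 0 = 0) :
    ∃ z, A = diagCircle z := by
  have hA := eq_of_mem_SU2 A.2
  rw [h, map_zero, neg_zero] at hA
  have hdet := (mem_specialUnitaryGroup_iff.mp A.2).2
  rw [hA, det_fin_two_of, mul_zero, sub_zero, mul_conj, ← ofReal_one, ofReal_inj,
    normSq_eq_norm_sq, pow_eq_one_iff_of_nonneg (norm_nonneg _) two_ne_zero] at hdet
  obtain ⟨z, hz⟩ : ∃ z : Circle, (z : ℂ) = A.val 0 0 :=
    ⟨⟨_, mem_sphere_zero_iff_norm.mpr hdet⟩, rfl⟩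
  rw [← hz, ← Circle.coe_inv_eq_conj, Circle.coe_inv] at hA
  exact ⟨z, Subtype.ext hA⟩

theorem SU2.trace_conj (g A : SU2) : (g * A * g⁻¹).val.trace = A.val.trace := by
  have hg : (g⁻¹ * g).val = 1 := congrArg Subtype.val (inv_mul_cancel g)
  rw [Submonoid.coe_mul] at hg
  rw [Submonoid.coe_mul, Submonoid.coe_mul, trace_mul_comm, ← mul_assoc, hg, one_mul]

theorem trace_diagCircle (z : Circle) : (diagCircle z).val.trace = z + (z : ℂ)⁻¹ :=
  trace_fin_two_of _ _ _ _

def SU2.weyl : SU2 := ⟨!![0, -1; 1, 0], by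
  simpa using mem_SU2_of_normSq_add_normSq (a := 0) (b := 1) (by simp)⟩

theorem SU2.weyl_conj_diagCircle (z : Circle) :
    weyl * diagCircle z * weyl⁻¹ = diagCircle z⁻¹ := by
  refine Subtype.ext ?_
  show weyl.val * (diagCircle z).val * star weyl.val = _
  rw [diagCircle_val, diagCircle_val, weyl, star_eq_conjTranspose]
  ext i j; fin_cases i <;> fin_cases j <;> simp [mul_apply, Fin.sum_univ_two]

theorem exists_mem_SU2_col_zero_eq_smul {v : Fin 2 → ℂ} (hv : v ≠ 0) :
    ∃ U ∈ SU2, ∃ c : ℂ, U.col 0 = c • v := by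
  set s := normSq (v 0) + normSq (v 1)
  have hs : 0 < s := by
    obtain ⟨i, hi⟩ := Function.ne_iff.mp hv
    have := normSq_pos.mpr hi
    fin_cases i <;> dsimp at this <;> linarith [normSq_nonneg (v 0), normSq_nonneg (v 1)]
  set c : ℂ := (((√s)⁻¹ : ℝ) : ℂ)
  have hc : normSq (c * v 0) + normSq (c * v 1) = 1 := by
    rw [normSq_mul, normSq_mul, ← mul_add, normSq_ofReal, ← sq, inv_pow, Real.sq_sqrt hs.le,
      inv_mul_cancel₀ hs.ne']
  refine ⟨_, mem_SU2_of_normSq_add_normSq hc, c, funext fun i => ?_⟩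
  fin_cases i <;> rfl

theorem exists_conj_eq_diagCircle_of_commute {A B : SU2} (h : A * B = B * A) :
    ∃ g : SU2, ∃ z w : Circle, g * A * g⁻¹ = diagCircle z ∧ g * B * g⁻¹ = diagCircle w := by
  have hAB : Commute (toLinAlgEquiv' A.val) (toLinAlgEquiv' B.val) :=
    Commute.map (congrArg Subtype.val h) toLinAlgEquiv'
  obtain ⟨v, hv, a, b, hAv, hBv⟩ := Module.End.exists_common_eigenvector hAB
  obtain ⟨U, hU, c, hUv⟩ := exists_mem_SU2_col_zero_eq_smul hv
  let u : SU2 := ⟨U, hU⟩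
  have hdiag : ∀ (M : SU2) (μ : ℂ), M.val *ᵥ v = μ • v →
      ∃ z, u⁻¹ * M * u⁻¹⁻¹ = diagCircle z := by
    intro M μ hM
    apply exists_eq_diagCircle_of_val_one_zero
    rw [inv_inv]
    refine mul_mul_apply_eq_zero_of_mulVec_eq_smul
      (mem_unitaryGroup_iff'.mp (mem_specialUnitaryGroup_iff.mp hU).1) (a := μ) ?_ one_ne_zero
    rw [hUv, mulVec_smul, hM, smul_comm]
  obtain ⟨z, hz⟩ := hdiag A a hAv
  obtain ⟨w, hw⟩ := hdiag B b hBv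
  exact ⟨u⁻¹, z, w, hz, hw⟩

instance : Fact (0 < 2 * Real.pi) := ⟨Real.two_pi_pos⟩

local notation "𝕋" => AddCircle (2 * Real.pi)

open AddCircle (homeomorphCircle' homeomorphCircle'_apply_mk)

theorem AddCircle.homeomorphCircle'_neg (x : 𝕋) :
    homeomorphCircle' (-x) = (homeomorphCircle' x)⁻¹ :=
  Real.Angle.toCircle_neg x

theorem AddCircle.coe_homeomorphCircle'_neg (x : 𝕋) :
    (homeomorphCircle' (-x) : ℂ) = (homeomorphCircle' x : ℂ)⁻¹ := by
  rw [homeomorphCircle'_neg, Circle.coe_inv]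

def torusPair (x : 𝕋 × 𝕋) : CommPairs :=
  ⟨(diagCircle (homeomorphCircle' x.1), diagCircle (homeomorphCircle' x.2)), by
    simp only [← map_mul, mul_comm]⟩

theorem continuous_torusPair : Continuous torusPair :=
  ((continuous_diagCircle.comp (homeomorphCircle'.continuous.comp continuous_fst)).prodMk
    (continuous_diagCircle.comp
      (homeomorphCircle'.continuous.comp continuous_snd))).subtype_mk _

theorem mk_torusPair_neg (x : 𝕋 × 𝕋) :
    Quotient.mk commSetoid (torusPair (-x)) = Quotient.mk commSetoid (torusPair x) :=
  Quotient.sound ⟨SU2.weyl, by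
    simp only [torusPair, Prod.fst_neg, Prod.snd_neg, AddCircle.homeomorphCircle'_neg,
      SU2.weyl_conj_diagCircle, inv_inv, and_self]⟩

def moduliMap : Quotient negSetoid → Quotient commSetoid :=
  Quotient.lift (fun x => Quotient.mk commSetoid (torusPair x)) <| by
    rintro x y (rfl | rfl)
    · rfl
    · exact (mk_torusPair_neg x).symm

theorem continuous_moduliMap : Continuous moduliMap :=
  (continuous_quotient_mk'.comp continuous_torusPair).quotient_lift _

def traceTriple (p : CommPairs) : ℂ × ℂ × ℂ :=
  (p.val.1.val.trace, p.val.2.val.trace, (p.val.1 * p.val.2).val.trace)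

def traceMap : Quotient commSetoid → ℂ × ℂ × ℂ :=
  Quotient.lift traceTriple <| by
    rintro p q ⟨g, h₁, h₂⟩
    have h₃ : q.val.1 * q.val.2 = g * (p.val.1 * p.val.2) * g⁻¹ := by rw [h₁, h₂]; group
    rw [traceTriple, traceTriple, h₃, h₁, h₂, SU2.trace_conj, SU2.trace_conj, SU2.trace_conj]

theorem continuous_traceMap : Continuous traceMap := by
  have h₁ : Continuous fun p : CommPairs => p.val.1.val := by fun_prop
  have h₂ : Continuous fun p : CommPairs => p.val.2.val := by fun_prop
  exact (h₁.matrix_trace.prodMk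
    (h₂.matrix_trace.prodMk (h₁.matrix_mul h₂).matrix_trace)).quotient_lift _

theorem traceTriple_torusPair (x : 𝕋 × 𝕋) :
    letI z : ℂ := homeomorphCircle' x.1
    letI w : ℂ := homeomorphCircle' x.2
    traceTriple (torusPair x) = (z + z⁻¹, w + w⁻¹, z * w + (z * w)⁻¹) := by
  simp only [traceTriple, torusPair, ← map_mul, trace_diagCircle, Circle.coe_mul]

theorem traceMap_moduliMap_injective : Function.Injective (traceMap ∘ moduliMap) := by
  rintro ⟨x⟩ ⟨y⟩ h
  change traceTriple (torusPair x) = traceTriple (torusPair y) at h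
  simp only [traceTriple_torusPair, Prod.mk.injEq] at h
  obtain ⟨h₁, h₂, h₃⟩ := h
  have hinj := Circle.coe_injective.comp homeomorphCircle'.injective
  refine Quotient.sound ?_
  rcases pair_eq_or_eq_inv_of_add_inv_eq (Circle.coe_ne_zero _) (Circle.coe_ne_zero _)
    (Circle.coe_ne_zero _) (Circle.coe_ne_zero _) h₁ h₂ h₃ with h | h <;>
    simp only [Prod.mk.injEq, ← AddCircle.coe_homeomorphCircle'_neg] at h
  · exact .inl (Prod.ext (hinj h.1) (hinj h.2))
  · exact .inr (Prod.ext (hinj h.1) (hinj h.2))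

theorem moduliMap_surjective : Function.Surjective moduliMap := by
  rintro ⟨⟨⟨A, B⟩, h⟩⟩
  obtain ⟨g, z, w, hz, hw⟩ := exists_conj_eq_diagCircle_of_commute h
  refine ⟨Quotient.mk negSetoid (homeomorphCircle'.symm z,
    homeomorphCircle'.symm w), (Quotient.sound (s := commSetoid) ⟨g, ?_, ?_⟩).symm⟩
  all_goals simp only [torusPair, Homeomorph.apply_symm_apply]
  exacts [hz.symm, hw.symm]

instance : T2Space (Quotient commSetoid) := by
  refine T2Space.of_injective_continuous ?_ continuous_traceMap
  intro c c' h
  obtain ⟨x, rfl⟩ := moduliMap_surjective c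
  obtain ⟨y, rfl⟩ := moduliMap_surjective c'
  rw [traceMap_moduliMap_injective h]

/-- The moduli space of the 2-torus: the map `(φ, ψ) ↦ (diag(e^{iφ}, e^{−iφ}),
diag(e^{iψ}, e^{−iψ}))` descends to a homeomorphism from `(ℝ/2πℤ)²/±` onto the
quotient of the set of commuting pairs of SU(2) by simultaneous conjugation. -/
theorem stmt12 :
    ∃ h : Quotient negSetoid ≃ₜ Quotient commSetoid,
      ∀ φ ψ : ℝ,
        h (Quotient.mk negSetoid ((φ : AddCircle (2 * Real.pi)),
            (ψ : AddCircle (2 * Real.pi)))) =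
          Quotient.mk commSetoid ⟨(diagSU φ, diagSU ψ), diagSU_comm φ ψ⟩ := by
  have hbij : Function.Bijective moduliMap :=
    ⟨traceMap_moduliMap_injective.of_comp, moduliMap_surjective⟩
  refine ⟨continuous_moduliMap.homeoOfEquivCompactToT2 (f := .ofBijective _ hbij), fun φ ψ => ?_⟩
  show Quotient.mk commSetoid (torusPair _) = _
  simp only [torusPair, homeomorphCircle'_apply_mk, diagCircle_exp]

end
end

section
/- Let a, b be coprime positive integers and let G_{a,b} = ⟨u, v | u^a = v^b⟩ be the torus knot group. Let ρ : G_{a,b} → SU(2) be an irreducible homomorphism (its image is nonabelian). Then ρ(u)^a = ρ(v)^b is central, i.e. equals 1 or −1, and there exist integers k, l with 0 < k < a, 0 < l < b, k ≡ l (mod 2), such that ang(ρ(u)) = kπ/a and ang(ρ(v)) = lπ/b. -/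
open Matrix

noncomputable section

/-- The single relator `u^a v^{-b}` of the torus knot group. -/
def torusRels (a b : ℕ) : Set (FreeGroup (Fin 2)) :=
  {FreeGroup.of 0 ^ a * (FreeGroup.of 1 ^ b)⁻¹}

/-- The torus knot group `G_{a,b} = ⟨u, v | u^a = v^b⟩`. -/
abbrev TorusKnotGroup (a b : ℕ) := PresentedGroup (torusRels a b)

/-- The generator `u` of the torus knot group. -/
def tkU (a b : ℕ) : TorusKnotGroup a b := PresentedGroup.of 0

/-- The generator `v` of the torus knot group. -/
def tkV (a b : ℕ) : TorusKnotGroup a b := PresentedGroup.of 1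

/-!
The relation `u^a = v^b` makes `ρ(u)^a = ρ(v)^b` commute with both `ρ(u)` and `ρ(v)`. In SU(2) the
centralizer of an element other than `±1` is abelian, so irreducibility forces `ρ(u)^a = ±1`.
By Cayley–Hamilton, `M² = (tr M) M - 1` on SU(2), so the traces of the powers of `M` satisfy the
Chebyshev recursion and `tr (M^n) = 2 cos (n · ang M)`. Hence `sin (a · ang ρ(u)) = 0`, and since
`ρ(u) ≠ ±1` its angle lies in `(0, π)`, so it is `kπ/a` with `0 < k < a`; likewise for `ρ(v)`.
Comparing traces of `ρ(u)^a = ρ(v)^b` gives `cos (kπ) = cos (lπ)`, i.e. `k ≡ l (mod 2)`.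
-/

open ComplexConjugate Real

lemma Matrix.sq_fin_two {R : Type*} [CommRing R] (M : Matrix (Fin 2) (Fin 2) R) :
    M ^ 2 = M.trace • M - M.det • 1 := by
  ext i j
  fin_cases i <;> fin_cases j <;>
    simp [sq, mul_apply, trace_fin_two, det_fin_two, Fin.sum_univ_two] <;> ring

lemma Matrix.trace_pow_fin_two_of_det_eq_one {M : Matrix (Fin 2) (Fin 2) ℂ} (hdet : M.det = 1)
    {θ : ℝ} (htr : M.trace = 2 * cos θ) (n : ℕ) :
    (M ^ n).trace = 2 * cos (n * θ) := by
  induction n using Nat.twoStepInduction with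
  | zero => simp
  | one => simpa using htr
  | more n ih₀ ih₁ =>
    have hrec : (M ^ (n + 2)).trace = M.trace * (M ^ (n + 1)).trace - (M ^ n).trace := by
      rw [pow_add, sq_fin_two, hdet, one_smul, mul_sub, mul_smul_comm, mul_one, trace_sub,
        trace_smul, ← pow_succ, smul_eq_mul]
    have hcos : cos ((n + 2 : ℕ) * θ) =
        2 * cos θ * cos ((n + 1 : ℕ) * θ) - cos (n * θ) := by
      have h₁ : ((n + 2 : ℕ) : ℝ) * θ = (n + 1 : ℕ) * θ + θ := by push_cast; ring
      have h₂ : (n : ℝ) * θ = (n + 1 : ℕ) * θ - θ := by push_cast; ring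
      rw [h₁, h₂, cos_add, cos_sub]
      ring
    rw [hrec, ih₀, ih₁, htr, hcos]
    push_cast
    ring

namespace SU2

section Entries

variable {M N : Matrix (Fin 2) (Fin 2) ℂ}

lemma entries (hM : M ∈ SU2) :
    M 1 1 = conj (M 0 0) ∧ M 1 0 = -conj (M 0 1) ∧
      Complex.normSq (M 0 0) + Complex.normSq (M 0 1) = 1 := by
  obtain ⟨hu, hdet⟩ := mem_specialUnitaryGroup_iff.mp hM
  have hadj : star M = M.adjugate := by
    rw [← inv_eq_left_inv hu.1, inv_def, hdet]
    simp
  have h := adjugate_fin_two M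
  rw [← hadj] at h
  have e11 : M 1 1 = conj (M 0 0) := by
    simpa [star_eq_conjTranspose] using (congrFun (congrFun h 0) 0).symm
  have e10 : M 1 0 = -conj (M 0 1) := by
    have := congrArg conj (congrFun (congrFun h 0) 1)
    simp at this
    simp [this]
  refine ⟨e11, e10, ?_⟩
  have hdet' := det_fin_two M
  rw [hdet, e11, e10, mul_neg, sub_neg_eq_add, Complex.mul_conj, Complex.mul_conj] at hdet'
  exact_mod_cast hdet'.symm

lemma trace_eq (hM : M ∈ SU2) : M.trace = 2 * (M 0 0).re := by
  rw [trace_fin_two, (entries hM).1, Complex.add_conj]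
  push_cast
  rfl

lemma re_sq_le_one (hM : M ∈ SU2) : (M 0 0).re ^ 2 ≤ 1 := by
  have hn := (entries hM).2.2
  rw [Complex.normSq_apply] at hn
  nlinarith [Complex.normSq_nonneg (M 0 1), mul_self_nonneg (M 0 0).im]

lemma re_sq_lt_one (hM : M ∈ SU2) (hM₁ : ¬(M = 1 ∨ M = -1)) : (M 0 0).re ^ 2 < 1 := by
  refine (re_sq_le_one hM).lt_of_ne fun hre => hM₁ ?_
  obtain ⟨e11, e10, hn⟩ := entries hM
  rw [Complex.normSq_apply] at hn
  have him : (M 0 0).im = 0 := by nlinarith [Complex.normSq_nonneg (M 0 1)]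
  have hβ : M 0 1 = 0 := Complex.normSq_eq_zero.mp (by nlinarith)
  have hα : M 0 0 = 1 ∨ M 0 0 = -1 := by
    rcases sq_eq_one_iff.mp hre with h | h
    · exact .inl (Complex.ext h him)
    · exact .inr (Complex.ext h (by simpa using him))
  rcases hα with hα | hα
  · left
    ext i j
    fin_cases i <;> fin_cases j <;> simp [e11, e10, hα, hβ]
  · right
    ext i j
    fin_cases i <;> fin_cases j <;> simp [e11, e10, hα, hβ]

-- With `M = !![α, β; -conj β, conj α]`, the two conditions say that the vectors `(Im α, β) ∈ ℝ × ℂ`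
-- of `M` and `N` are parallel.
lemma commute_iff (hM : M ∈ SU2) (hN : N ∈ SU2) :
    Commute M N ↔ M 0 1 * conj (N 0 1) = N 0 1 * conj (M 0 1) ∧
      N 0 1 * (M 0 0 - conj (M 0 0)) = M 0 1 * (N 0 0 - conj (N 0 0)) := by
  obtain ⟨m11, m10, -⟩ := entries hM
  obtain ⟨n11, n10, -⟩ := entries hN
  constructor
  · intro h
    have h00 := congrFun (congrFun h.eq 0) 0
    have h01 := congrFun (congrFun h.eq 0) 1
    simp only [mul_apply, Fin.sum_univ_two, m11, m10, n11, n10] at h00 h01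
    exact ⟨by linear_combination -h00, by linear_combination h01⟩
  · rintro ⟨e₁, e₂⟩
    have e₁' := congrArg conj e₁
    have e₂' := congrArg conj e₂
    simp only [map_mul, map_sub, Complex.conj_conj] at e₁' e₂'
    ext i j
    fin_cases i <;> fin_cases j <;>
      simp only [mul_apply, Fin.sum_univ_two, m11, m10, n11, n10, Fin.isValue, Fin.zero_eta,
        Fin.mk_one]
    · linear_combination -e₁
    · linear_combination e₂
    · linear_combination -e₂'
    · linear_combination -e₁'

end Entries

lemma commute_of_val_eq_one_or_neg_one {M : SU2} (hM : M.val = 1 ∨ M.val = -1) (N : SU2) :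
    Commute M N := by
  apply Subtype.ext
  show M.val * N.val = N.val * M.val
  rcases hM with h | h <;> simp [h]

lemma commute_of_commute_of_commute {M N P : SU2} (hM₁ : ¬(M.val = 1 ∨ M.val = -1))
    (hMN : Commute M N) (hMP : Commute M P) : Commute N P := by
  obtain ⟨M, hM⟩ := M
  obtain ⟨N, hN⟩ := N
  obtain ⟨P, hP⟩ := P
  replace hMN := (commute_iff hM hN).mp (congrArg Subtype.val hMN.eq)
  replace hMP := (commute_iff hM hP).mp (congrArg Subtype.val hMP.eq)
  refine Subtype.ext ((commute_iff hN hP).mpr ?_).eq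
  by_cases hβ : M 0 1 = 0
  · have hα : M 0 0 - conj (M 0 0) ≠ 0 := by
      have hn := (entries hM).2.2
      have hre := re_sq_lt_one hM hM₁
      rw [hβ, map_zero, add_zero, Complex.normSq_apply] at hn
      rw [Complex.sub_conj]
      have : (M 0 0).im ≠ 0 := fun h => by nlinarith
      simpa using this
    have hN₀ : N 0 1 = 0 := by simpa [hβ, hα] using hMN.2
    have hP₀ : P 0 1 = 0 := by simpa [hβ, hα] using hMP.2
    simp [hN₀, hP₀]
  · constructor
    · apply mul_left_cancel₀ (mul_ne_zero hβ ((map_ne_zero conj).mpr hβ))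
      linear_combination conj (M 0 1) * N 0 1 * hMP.1 - conj (M 0 1) * P 0 1 * hMN.1
    · apply mul_left_cancel₀ hβ
      linear_combination N 0 1 * hMP.2 - P 0 1 * hMN.2

lemma coe_pow (M : SU2) (n : ℕ) : ((M ^ n : SU2) : Matrix (Fin 2) (Fin 2) ℂ) = M.val ^ n :=
  SubmonoidClass.coe_pow M n

lemma ang_eq_arccos (M : SU2) : ang M = arccos (M.val 0 0).re := by
  rw [ang, trace_eq M.2]
  norm_num

lemma trace_eq_two_mul_cos_ang (M : SU2) : M.val.trace = 2 * cos (ang M) := by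
  have h := re_sq_le_one M.2
  rw [trace_eq M.2, ang_eq_arccos, cos_arccos (by nlinarith) (by nlinarith)]

lemma trace_pow (M : SU2) (n : ℕ) :
    ((M ^ n : SU2) : Matrix (Fin 2) (Fin 2) ℂ).trace = 2 * cos (n * ang M) := by
  rw [coe_pow]
  exact trace_pow_fin_two_of_det_eq_one (mem_specialUnitaryGroup_iff.mp M.2).2
    (trace_eq_two_mul_cos_ang M) n

lemma cos_mul_ang (M : SU2) (n : ℕ) :
    cos (n * ang M) = (((M ^ n : SU2) : Matrix (Fin 2) (Fin 2) ℂ).trace).re / 2 := by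
  rw [trace_pow, ← Complex.ofReal_ofNat, ← Complex.ofReal_mul, Complex.ofReal_re]
  ring

lemma cos_mul_ang_eq_of_pow_eq {M N : SU2} {m n : ℕ} (h : M ^ m = N ^ n) :
    cos (m * ang M) = cos (n * ang N) := by
  rw [cos_mul_ang, cos_mul_ang, h]

lemma sin_mul_ang_eq_zero {M : SU2} {n : ℕ} (h : (M ^ n).val = 1 ∨ (M ^ n).val = -1) :
    sin (n * ang M) = 0 := by
  rw [sin_eq_zero_iff_cos_eq, cos_mul_ang]
  rcases h with h | h <;> simp [h]

lemma ang_mem_Ioo {M : SU2} (hM : ¬(M.val = 1 ∨ M.val = -1)) : ang M ∈ Set.Ioo 0 π := by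
  have h := re_sq_lt_one M.2 hM
  rw [ang_eq_arccos]
  exact ⟨arccos_pos.mpr (by nlinarith), arccos_lt_pi.mpr (by nlinarith)⟩

end SU2

lemma Real.exists_int_eq_mul_pi_div_of_sin_mul_eq_zero {n : ℕ} (hn : 0 < n) {θ : ℝ}
    (hθ : θ ∈ Set.Ioo 0 π) (h : sin (n * θ) = 0) : ∃ k : ℤ, 0 < k ∧ k < n ∧ θ = k * π / n := by
  obtain ⟨k, hk⟩ := sin_eq_zero_iff.mp h
  have hn' : (0 : ℝ) < n := by exact_mod_cast hn
  refine ⟨k, ?_, ?_, by rw [eq_div_iff hn'.ne']; linarith⟩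
  · have : (0 : ℝ) < k := pos_of_mul_pos_left (hk ▸ mul_pos hn' hθ.1) pi_pos.le
    exact_mod_cast this
  · have : (k : ℝ) < n := lt_of_mul_lt_mul_right (hk ▸ mul_lt_mul_of_pos_left hθ.2 hn') pi_pos.le
    exact_mod_cast this

lemma Int.emod_two_eq_of_cos_mul_pi_eq {k l : ℤ} (h : cos (k * π) = cos (l * π)) :
    k % 2 = l % 2 := by
  rw [cos_int_mul_pi, cos_int_mul_pi] at h
  rcases Int.even_or_odd k with hk | hk <;> rcases Int.even_or_odd l with hl | hl <;>
    simp only [hk.neg_one_zpow, hl.neg_one_zpow] at h <;> norm_num at h <;>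
    simp [Int.even_iff.mp, Int.odd_iff.mp, *]

theorem PresentedGroup.commute_of_commute_of {α G : Type*} [Group G] {rels : Set (FreeGroup α)}
    (f : PresentedGroup rels →* G) (hf : ∀ i j, Commute (f (of i)) (f (of j)))
    (x y : PresentedGroup rels) : Commute (f x) (f y) := by
  let S := Set.range (f ∘ of)
  have hS : ∀ x ∈ S, ∀ y ∈ S, x * y = y * x := by
    rintro _ ⟨i, rfl⟩ _ ⟨j, rfl⟩
    exact hf i j
  have hmem (x : PresentedGroup rels) : f x ∈ S.centralizer.centralizer :=
    generated_by rels ((Subgroup.centralizer S.centralizer).comap f)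
      (fun j => Set.subset_centralizer_centralizer ⟨j, rfl⟩) x
  exact Set.centralizer_centralizer_comm_of_comm hS _ (hmem x) _ (hmem y)

theorem tkU_pow_eq_tkV_pow (a b : ℕ) : tkU a b ^ a = tkV a b ^ b := by
  rw [← mul_inv_eq_one]
  exact PresentedGroup.one_of_mem (x := FreeGroup.of 0 ^ a * (FreeGroup.of 1 ^ b)⁻¹) rfl

theorem TorusKnotGroup.commute_of_commute {a b : ℕ} {G : Type*} [Group G]
    (f : TorusKnotGroup a b →* G) (h : Commute (f (tkU a b)) (f (tkV a b)))
    (x y : TorusKnotGroup a b) : Commute (f x) (f y) := by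
  refine PresentedGroup.commute_of_commute_of f (fun i j => ?_) x y
  fin_cases i <;> fin_cases j
  exacts [.refl _, h, h.symm, .refl _]

theorem stmt13_general (a b : ℕ) (ha : 0 < a) (hb : 0 < b)
    (ρ : TorusKnotGroup a b →* SU2)
    (hirr : ∃ γ δ : TorusKnotGroup a b, ρ γ * ρ δ ≠ ρ δ * ρ γ) :
    ρ (tkU a b) ^ a = ρ (tkV a b) ^ b ∧
    ((ρ (tkU a b) ^ a : SU2).val = 1 ∨ (ρ (tkU a b) ^ a : SU2).val = -1) ∧
    ∃ k l : ℤ, 0 < k ∧ k < (a : ℤ) ∧ 0 < l ∧ l < (b : ℤ) ∧ k % 2 = l % 2 ∧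
      ang (ρ (tkU a b)) = k * Real.pi / a ∧ ang (ρ (tkV a b)) = l * Real.pi / b := by
  set A := ρ (tkU a b)
  set B := ρ (tkV a b)
  have hrel : A ^ a = B ^ b := by rw [← map_pow, ← map_pow, tkU_pow_eq_tkV_pow]
  have hAB : ¬Commute A B := fun h => by
    obtain ⟨γ, δ, hγδ⟩ := hirr
    exact hγδ (TorusKnotGroup.commute_of_commute ρ h γ δ).eq
  have hA : ¬(A.val = 1 ∨ A.val = -1) := fun h => hAB (SU2.commute_of_val_eq_one_or_neg_one h B)
  have hB : ¬(B.val = 1 ∨ B.val = -1) := fun h =>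
    hAB (SU2.commute_of_val_eq_one_or_neg_one h A).symm
  have hcentral : (A ^ a).val = 1 ∨ (A ^ a).val = -1 := by
    by_contra h
    exact hAB (SU2.commute_of_commute_of_commute h ((Commute.refl A).pow_left a)
      (hrel ▸ (Commute.refl B).pow_left b))
  obtain ⟨k, hk₀, hka, hkA⟩ := Real.exists_int_eq_mul_pi_div_of_sin_mul_eq_zero ha
    (SU2.ang_mem_Ioo hA) (SU2.sin_mul_ang_eq_zero hcentral)
  obtain ⟨l, hl₀, hlb, hlB⟩ := Real.exists_int_eq_mul_pi_div_of_sin_mul_eq_zero hb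
    (SU2.ang_mem_Ioo hB) (SU2.sin_mul_ang_eq_zero (hrel ▸ hcentral))
  refine ⟨hrel, hcentral, k, l, hk₀, hka, hl₀, hlb, Int.emod_two_eq_of_cos_mul_pi_eq ?_, hkA, hlB⟩
  have hcos := SU2.cos_mul_ang_eq_of_pow_eq hrel
  rwa [hkA, hlB, mul_div_cancel₀ _ (by positivity), mul_div_cancel₀ _ (by positivity)] at hcos

/-- For an irreducible SU(2)-representation of the torus knot group,
`ρ(u)^a = ρ(v)^b` is central, and the angles of `ρ(u)`, `ρ(v)` are of the form
`kπ/a`, `lπ/b` with `0 < k < a`, `0 < l < b` and `k ≡ l (mod 2)`. -/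
theorem stmt13 (a b : ℕ) (ha : 0 < a) (hb : 0 < b) (hab : Nat.Coprime a b)
    (ρ : TorusKnotGroup a b →* SU2)
    (hirr : ∃ γ δ : TorusKnotGroup a b, ρ γ * ρ δ ≠ ρ δ * ρ γ) :
    ρ (tkU a b) ^ a = ρ (tkV a b) ^ b ∧
    ((ρ (tkU a b) ^ a : SU2).val = 1 ∨ (ρ (tkU a b) ^ a : SU2).val = -1) ∧
    ∃ k l : ℤ, 0 < k ∧ k < (a : ℤ) ∧ 0 < l ∧ l < (b : ℤ) ∧ k % 2 = l % 2 ∧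
      ang (ρ (tkU a b)) = k * Real.pi / a ∧ ang (ρ (tkV a b)) = l * Real.pi / b :=
  stmt13_general a b ha hb ρ hirr

end
end
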